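/- Bott's formula on projective space: for integers n ≥ 1, 0 ≤ p ≤ n, and k > p, the dimension of H⁰(ℙⁿ, Ω^p(k)) equals binomial(k+n-p, k) · binomial(k-1, p); moreover h⁰(ℙⁿ, Ω^p(k)) = 0 whenever k ≤ p and (k,p) ≠ (0,0). -/

import Mathlib

/-!
STATEMENT 4. Bott's formula on projective space: for `n ≥ 1`, `0 ≤ p ≤ n` and `k > p`,
`h⁰(ℙⁿ, Ω^p(k)) = C(k+n-p, k) · C(k-1, p)`; moreover `h⁰(ℙⁿ, Ω^p(k)) = 0` whenever
`k ≤ p` and `(k, p) ≠ (0, 0)`.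

Concrete model.  By the (exact) Euler/Koszul complex on `ℙⁿ`,
`H⁰(ℙⁿ, Ω^p(k))` is canonically isomorphic to the kernel of the contraction with the
Euler vector field
  `δ : ⋀^p V^* ⊗ S_{k-p} → ⋀^{p-1} V^* ⊗ S_{k-p+1}`,
where `V = ℂ^{n+1}`, `S_m` is the space of homogeneous polynomials of degree `m` in the
variables `x_0, …, x_n` (zero for `m < 0`), and on a basis element indexed by a subset
`s` with `|s| = p` of the variables,
  `(δω)_t = ∑_{i ∉ t} (-1)^{#{j ∈ t : j < i}} · x_i · ω_{t ∪ {i}}` for `|t| = p - 1`.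
We formalize `H⁰(ℙⁿ, Ω^p(k))` as this kernel (intersected with the homogeneity
conditions), a subspace of the space of functions from `p`-element subsets of
`Fin (n+1)` to `MvPolynomial (Fin (n+1)) ℂ`. -/

open MvPolynomial

/-- Homogeneous polynomials of (integer) degree `d`; zero if `d < 0`. -/
noncomputable def homDeg (n : ℕ) (d : ℤ) :
    Submodule ℂ (MvPolynomial (Fin (n + 1)) ℂ) :=
  if 0 ≤ d then MvPolynomial.homogeneousSubmodule (Fin (n + 1)) ℂ d.toNat else ⊥

/-- The `t`-component of the contraction with the Euler vector field,
on `p`-forms with polynomial coefficients (here `t` is a subset with `|t| + 1 = p`). -/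
noncomputable def eulerContract (n p : ℕ) (t : Finset (Fin (n + 1))) (ht : t.card + 1 = p) :
    ({s : Finset (Fin (n + 1)) // s.card = p} → MvPolynomial (Fin (n + 1)) ℂ) →ₗ[ℂ]
      MvPolynomial (Fin (n + 1)) ℂ :=
  ∑ i ∈ tᶜ.attach,
    ((-1 : ℂ) ^ (t.filter (fun j => j < i.1)).card) •
      ((LinearMap.mulLeft ℂ (MvPolynomial.X i.1 : MvPolynomial (Fin (n + 1)) ℂ)).comp
        (LinearMap.proj (⟨insert i.1 t, by
          rw [Finset.card_insert_of_notMem (Finset.mem_compl.mp i.2), ht]⟩ :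
            {s : Finset (Fin (n + 1)) // s.card = p})))

/-- The model for `H⁰(ℙⁿ, Ω^p(k))`: `p`-forms whose coefficients are homogeneous
polynomials of degree `k - p` and which are killed by contraction with the Euler
vector field. -/
noncomputable def H0Omega (n p : ℕ) (k : ℤ) :
    Submodule ℂ ({s : Finset (Fin (n + 1)) // s.card = p} → MvPolynomial (Fin (n + 1)) ℂ) :=
  (Submodule.pi Set.univ (fun _ => homDeg n (k - p))) ⊓
    ⨅ (t : Finset (Fin (n + 1))) (ht : t.card + 1 = p),
      LinearMap.ker (eulerContract n p t ht)

/-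
Write forms with polynomial coefficients on `V = ℂⁿ⁺¹` as `ω = ∑ ω_s dx_s`, let `ι` be the
contraction with the Euler field `E = ∑ xᵢ ∂ᵢ` and `d` the exterior derivative. Cartan's formula
`ι d + d ι = L_E`, together with Euler's identity, shows that `L_E` multiplies a `p`-form whose
coefficients are homogeneous of degree `m` by `m + p`. Hence `ι d` is multiplication by `k` on
`H⁰(Ω^p(k)) = ker ι`, so for `k > p` the sequence
`0 → H⁰(Ω^{p+1}(k)) → ⋀^{p+1} V^* ⊗ S_{k-p-1} → H⁰(Ω^p(k)) → 0` is exact and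
`h⁰(Ω^p(k)) + h⁰(Ω^{p+1}(k)) = C(n+1, p+1) · C(n+k-p-1, n)`. Downward induction from
`h⁰(Ω^{n+1}(k)) = 0` gives Bott's formula. The identity `ι d = k` on `ker ι` also gives the
vanishing for `k = p ≥ 1` (there `d` kills the constant coefficients) and in degree `p = n + 1`
(there is no `(n+2)`-form).
-/

open Finset Module

instance MvPolynomial.finite_homogeneousSubmodule (σ R : Type*) [CommSemiring R] [Finite σ]
    (m : ℕ) : Module.Finite R (homogeneousSubmodule σ R m) :=
  Module.Finite.iff_fg.mpr (homogeneousSubmodule_fg σ R m)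

theorem MvPolynomial.finrank_homogeneousSubmodule (σ K : Type*) [Fintype σ] [Field K] (m : ℕ) :
    finrank K (homogeneousSubmodule σ K m) = (Fintype.card σ + m - 1).choose m := by
  classical
  have hset : {d : σ →₀ ℕ | d.degree = m} = ↑(univ.finsuppAntidiag m : Finset (σ →₀ ℕ)) := by
    ext d; simp [mem_finsuppAntidiag, Finsupp.degree_eq_sum]
  rw [homogeneousSubmodule_eq_finsupp_supported, hset,
    (AddMonoidAlgebra.supportedEquivFinsupp _).finrank_eq, finrank_finsupp_self]
  simp [card_finsuppAntidiag_nat_eq_choose]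

theorem Submodule.finrank_pi_univ_const {K M ι : Type*} [Field K] [AddCommGroup M] [Module K M]
    [Fintype ι] (W : Submodule K M) [FiniteDimensional K W] :
    finrank K (Submodule.pi Set.univ fun _ : ι => W) = Fintype.card ι * finrank K W := by
  conv_lhs => rw [← W.range_subtype, ← LinearMap.range_compLeft,
    LinearMap.finrank_range_of_inj (W.injective_subtype.comp_left), finrank_pi_fintype]
  simp

instance Submodule.finiteDimensional_pi_univ_const {K M ι : Type*} [Field K] [AddCommGroup M]
    [Module K M] [Finite ι] (W : Submodule K M) [FiniteDimensional K W] :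
    FiniteDimensional K (Submodule.pi Set.univ fun _ : ι => W) := by
  rw [← W.range_subtype, ← LinearMap.range_compLeft]
  infer_instance

theorem Submodule.finrank_map_add_finrank_inf_ker {K M N : Type*} [Field K] [AddCommGroup M]
    [Module K M] [AddCommGroup N] [Module K N] (f : M →ₗ[K] N) (P : Submodule K M)
    [FiniteDimensional K P] :
    finrank K (P.map f) + finrank K ↥(P ⊓ LinearMap.ker f) = finrank K P := by
  rw [← LinearMap.range_domRestrict, ← (Submodule.comapSubtypeEquivOfLe inf_le_left).finrank_eq,
    ← LinearMap.finrank_range_add_finrank_ker (f.domRestrict P), LinearMap.ker_domRestrict,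
    Submodule.comap_inf, Submodule.comap_subtype_self, top_inf_eq]

theorem Finset.sum_sum_erase_eq_zero_of_antisymm {ι M : Type*} [DecidableEq ι] [AddCommGroup M]
    {s : Finset ι} {g : ι → ι → M} (h : ∀ i ∈ s, ∀ j ∈ s, i ≠ j → g i j = -g j i) :
    ∑ i ∈ s, ∑ j ∈ s.erase i, g i j = 0 := by
  rw [← sum_finset_product' s.offDiag s (fun i => s.erase i)
    (fun x => by rw [mem_offDiag, mem_erase]; tauto)]
  refine sum_involution (fun x _ => x.swap) (fun x hx => ?_) (fun x hx _ => ?_)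
    (fun x hx => ?_) (fun x _ => x.swap_swap)
  · rw [mem_offDiag] at hx
    rw [Prod.fst_swap, Prod.snd_swap, h _ hx.1 _ hx.2.1 hx.2.2, neg_add_cancel]
  · rw [mem_offDiag] at hx
    exact fun hswap => hx.2.2 (congrArg Prod.snd hswap)
  · rw [mem_offDiag] at hx ⊢
    exact ⟨hx.2.1, hx.1, hx.2.2.symm⟩

/- After multiplying by `(q + m + 1) (q + 1)`, the absorption identities turn every term into a
multiple of `C(q+m+r, q+m) · C(q+m, q)`, and the claim becomes
`(q+m+r+1)(q+1) + r m = (q+r+1)(q+m+1)`. -/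
theorem Nat.choose_mul_choose_add_choose_mul_choose (q m r : ℕ) :
    (q + m + r + 1).choose (q + 1 + m) * (q + m).choose q +
        (q + m + r).choose (q + 1 + m) * (q + m).choose (q + 1) =
      (q + r + 1).choose (q + 1) * (q + r + m).choose m := by
  rw [Nat.add_right_comm q 1 m]
  have h1 := Nat.add_one_mul_choose_eq (q + m + r) (q + m)
  have h2 := Nat.choose_succ_right_eq (q + m + r) (q + m)
  have h3 := Nat.choose_succ_right_eq (q + m) q
  have h4 := Nat.add_one_mul_choose_eq (q + r) q
  have h5 : (q + r + m).choose m * (q + r).choose q =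
      (q + m + r).choose (q + m) * (q + m).choose q := by
    rw [← Nat.choose_symm_add, Nat.choose_mul (by omega), Nat.choose_mul (by omega),
      Nat.add_right_comm q r m, Nat.add_sub_cancel_left, Nat.add_sub_cancel_left, Nat.add_assoc,
      Nat.add_sub_cancel_left, Nat.choose_symm_add (a := m)]
  rw [Nat.add_sub_cancel_left] at h2 h3
  refine Nat.eq_of_mul_eq_mul_right (show 0 < (q + m + 1) * (q + 1) by positivity) ?_
  zify at h1 h2 h3 h4 h5 ⊢
  linear_combination (-(((q + m).choose q : ℤ) * (q + 1))) * h1 +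
    (((q + m).choose (q + 1) : ℤ) * (q + 1)) * h2 + (((q + m + r).choose (q + m) : ℤ) * r) * h3 +
    (((q + r + m).choose m : ℤ) * (q + m + 1)) * h4 - ((q + r + 1) * (q + m + 1) : ℤ) * h5

/- A form `∑ ω_s dx_s` with coefficients in `MvPolynomial σ R` is encoded as `s ↦ ω_s` on all
finsets `s`, so forms of all degrees live in one type; `sign t i` is the sign in
`dx_i ∧ dx_t = sign t i • dx_{insert i t}`. -/
namespace PolyForm

variable {σ R : Type*} [LinearOrder σ] [CommRing R]

def sign (t : Finset σ) (i : σ) : R := (-1) ^ #{j ∈ t | j < i}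

theorem sign_mul_self (t : Finset σ) (i : σ) : (sign t i : R) * sign t i = 1 := by
  rw [sign, ← pow_add, ← two_mul, pow_mul, neg_one_sq, one_pow]

theorem sign_insert {a : σ} {t : Finset σ} (ha : a ∉ t) (i : σ) :
    (sign (insert a t) i : R) = (if a < i then -1 else 1) * sign t i := by
  rw [sign, sign, filter_insert]
  split_ifs with h
  · rw [card_insert_of_notMem (fun hc => ha (mem_of_mem_filter a hc)), pow_succ, mul_comm]
  · rw [one_mul]

theorem sign_insert_self (t : Finset σ) (a : σ) : (sign (insert a t) a : R) = sign t a := by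
  rw [sign, sign, filter_insert, if_neg (lt_irrefl a)]

theorem sign_erase_self (t : Finset σ) (a : σ) : (sign (t.erase a) a : R) = sign t a := by
  rw [sign, sign, filter_erase, erase_eq_of_notMem (by simp)]

theorem sign_mul_sign_insert_eq_neg {i j : σ} {t : Finset σ} (hi : i ∉ t) (hj : j ∉ t)
    (hij : i ≠ j) : (sign t i * sign (insert i t) j : R) = -(sign t j * sign (insert j t) i) := by
  rw [sign_insert hi, sign_insert hj]
  rcases hij.lt_or_gt with h | h
  · rw [if_pos h, if_neg h.not_gt]; ring
  · rw [if_neg h.not_gt, if_pos h]; ring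

theorem sign_mul_sign_insert_eq_neg_sign_mul_sign_erase {i j : σ} {s : Finset σ} (hi : i ∉ s)
    (hj : j ∈ s) : (sign s i * sign (insert i s) j : R) = -(sign s j * sign (s.erase j) i) := by
  have hij : i ≠ j := fun h => hi (h ▸ hj)
  have hjt : j ∉ s.erase j := notMem_erase j s
  have hit : i ∉ insert j (s.erase j) := by rwa [insert_erase hj]
  conv_lhs => rw [← insert_erase hj]
  rw [sign_insert hjt, sign_insert hit, sign_insert_self, ← sign_erase_self s j]
  rcases hij.lt_or_gt with h | h
  · rw [if_pos h, if_neg h.not_gt]; ring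
  · rw [if_neg h.not_gt, if_pos h]; ring

noncomputable def d (ω : Finset σ → MvPolynomial σ R) (s : Finset σ) : MvPolynomial σ R :=
  ∑ i ∈ s, (sign s i : R) • pderiv i (ω (s.erase i))

theorem isHomogeneous_d {ω : Finset σ → MvPolynomial σ R} {m : ℕ}
    (hω : ∀ s, (ω s).IsHomogeneous m) (s : Finset σ) : (d ω s).IsHomogeneous (m - 1) :=
  IsHomogeneous.sum _ _ _ fun i _ => by
    rw [smul_eq_C_mul]
    exact (hω _).pderiv.C_mul _

theorem d_eq_zero_of_isHomogeneous_zero {ω : Finset σ → MvPolynomial σ R}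
    (hω : ∀ s, (ω s).IsHomogeneous 0) : d ω = 0 := by
  funext s
  refine sum_eq_zero fun i _ => ?_
  have hconst := hω (s.erase i)
  rw [← totalDegree_zero_iff_isHomogeneous, totalDegree_eq_zero_iff_eq_C] at hconst
  rw [hconst, pderiv_C, smul_zero]

variable [Fintype σ]

noncomputable def contract (ω : Finset σ → MvPolynomial σ R) (t : Finset σ) : MvPolynomial σ R :=
  ∑ i ∈ tᶜ, (sign t i : R) • (X i * ω (insert i t))

theorem contract_contract (ω : Finset σ → MvPolynomial σ R) : contract (contract ω) = 0 := by
  funext t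
  have expand : ∀ i ∈ tᶜ, (sign t i : R) • (X i * contract ω (insert i t)) =
      ∑ j ∈ tᶜ.erase i, (sign t i * sign (insert i t) j : R) •
        (X i * X j * ω (insert j (insert i t))) := by
    intro i _
    rw [contract, mul_sum, smul_sum, compl_insert]
    refine sum_congr rfl fun j _ => ?_
    rw [mul_smul_comm, smul_smul, mul_assoc]
  rw [contract, sum_congr rfl expand, Pi.zero_apply]
  refine sum_sum_erase_eq_zero_of_antisymm fun i hi j hj hij => ?_
  rw [mem_compl] at hi hj
  rw [sign_mul_sign_insert_eq_neg hi hj hij, neg_smul, mul_comm (X i), Finset.insert_comm]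

theorem contract_d_apply (ω : Finset σ → MvPolynomial σ R) (s : Finset σ) :
    contract (d ω) s = ∑ i ∈ sᶜ, X i * pderiv i (ω s) +
      ∑ i ∈ sᶜ, ∑ j ∈ s, (sign s i * sign (insert i s) j : R) •
        (X i * pderiv j (ω (insert i (s.erase j)))) := by
  rw [contract, ← sum_add_distrib]
  refine sum_congr rfl fun i hi => ?_
  have his : i ∉ s := mem_compl.1 hi
  rw [d, sum_insert his, erase_insert his, sign_insert_self, mul_add, smul_add, mul_smul_comm,
    smul_smul, sign_mul_self, one_smul, mul_sum, smul_sum]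
  congr 1
  refine sum_congr rfl fun j hj => ?_
  rw [erase_insert_of_ne (fun h : i = j => his (h ▸ hj)), mul_smul_comm, smul_smul]

theorem d_contract_apply (ω : Finset σ → MvPolynomial σ R) (s : Finset σ) :
    d (contract ω) s = ∑ j ∈ s, (ω s + X j * pderiv j (ω s)) +
      ∑ j ∈ s, ∑ i ∈ sᶜ, (sign s j * sign (s.erase j) i : R) •
        (X i * pderiv j (ω (insert i (s.erase j)))) := by
  rw [d, ← sum_add_distrib]
  refine sum_congr rfl fun j hj => ?_
  have hjc : j ∉ sᶜ := fun h => mem_compl.1 h hj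
  rw [contract, compl_erase, sum_insert hjc, insert_erase hj, sign_erase_self, map_add,
    smul_add, Derivation.map_smul, pderiv_mul, pderiv_X_self, one_mul, smul_smul, sign_mul_self,
    one_smul, map_sum, smul_sum]
  congr 1
  refine sum_congr rfl fun i hi => ?_
  have hij : i ≠ j := fun h => mem_compl.1 hi (h ▸ hj)
  rw [Derivation.map_smul, pderiv_mul, pderiv_X_of_ne hij, zero_mul, zero_add, smul_smul]

theorem contract_d_add_d_contract (ω : Finset σ → MvPolynomial σ R) (s : Finset σ) :
    contract (d ω) s + d (contract ω) s = ∑ i, X i * pderiv i (ω s) + #s • ω s := by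
  rw [contract_d_apply, d_contract_apply, sum_comm (s := sᶜ)]
  have hcancel : ∀ j ∈ s, ∀ i ∈ sᶜ, (sign s i * sign (insert i s) j : R) •
      (X i * pderiv j (ω (insert i (s.erase j)))) =
      -((sign s j * sign (s.erase j) i : R) • (X i * pderiv j (ω (insert i (s.erase j))))) :=
    fun j hj i hi => by
      rw [sign_mul_sign_insert_eq_neg_sign_mul_sign_erase (mem_compl.1 hi) hj, neg_smul]
  rw [sum_congr rfl fun j hj => sum_congr rfl (hcancel j hj), sum_add_distrib, sum_const,
    ← sum_compl_add_sum s]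
  simp only [sum_neg_distrib]
  abel

theorem isHomogeneous_contract {ω : Finset σ → MvPolynomial σ R} {m : ℕ}
    (hω : ∀ s, (ω s).IsHomogeneous m) (t : Finset σ) : (contract ω t).IsHomogeneous (m + 1) :=
  IsHomogeneous.sum _ _ _ fun i _ => by
    rw [smul_eq_C_mul, add_comm]
    exact ((isHomogeneous_X R i).mul (hω _)).C_mul _

theorem contract_d_of_contract_eq_zero {ω : Finset σ → MvPolynomial σ R} {m : ℕ}
    (hω : ∀ s, (ω s).IsHomogeneous m) (hc : contract ω = 0) (s : Finset σ) :
    contract (d ω) s = (m + #s) • ω s := by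
  have hcartan := contract_d_add_d_contract ω s
  rw [hc, (hω s).sum_X_mul_pderiv, ← add_smul] at hcartan
  simpa [d] using hcartan

end PolyForm

namespace Bott

open PolyForm

variable {n p : ℕ}

abbrev Form (n p : ℕ) :=
  {s : Finset (Fin (n + 1)) // s.card = p} → MvPolynomial (Fin (n + 1)) ℂ

noncomputable def extendByZero (ω : Form n p) (s : Finset (Fin (n + 1))) :
    MvPolynomial (Fin (n + 1)) ℂ :=
  if h : s.card = p then ω ⟨s, h⟩ else 0

theorem extendByZero_val (ω : Form n p) (s : {s : Finset (Fin (n + 1)) // s.card = p}) :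
    extendByZero ω s.1 = ω s :=
  dif_pos s.2

theorem extendByZero_of_card_ne (ω : Form n p) {s : Finset (Fin (n + 1))} (h : #s ≠ p) :
    extendByZero ω s = 0 :=
  dif_neg h

theorem extendByZero_injective : Function.Injective (extendByZero (n := n) (p := p)) :=
  fun ω ω' h => funext fun s => by rw [← extendByZero_val ω s, h, extendByZero_val]

theorem isHomogeneous_extendByZero {ω : Form n p} {m : ℕ} (hω : ∀ s, (ω s).IsHomogeneous m)
    (s : Finset (Fin (n + 1))) : (extendByZero ω s).IsHomogeneous m := by
  unfold extendByZero
  split_ifs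
  exacts [hω _, isHomogeneous_zero _ _ _]

theorem contract_extendByZero_of_card_ne (ω : Form n p) {t : Finset (Fin (n + 1))}
    (h : #t + 1 ≠ p) : contract (extendByZero ω) t = 0 :=
  sum_eq_zero fun i hi => by
    rw [extendByZero_of_card_ne ω (by rwa [card_insert_of_notMem (mem_compl.1 hi)]), mul_zero,
      smul_zero]

theorem d_extendByZero_of_card_ne (ω : Form n p) {s : Finset (Fin (n + 1))} (h : #s ≠ p + 1) :
    d (extendByZero ω) s = 0 :=
  sum_eq_zero fun i hi => by
    have hs : 0 < #s := card_pos.2 ⟨i, hi⟩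
    rw [extendByZero_of_card_ne ω (by rw [card_erase_of_mem hi]; omega), map_zero, smul_zero]

theorem eulerContract_eq_contract (t : Finset (Fin (n + 1))) (ht : t.card + 1 = p)
    (ω : Form n p) :
    eulerContract n p t ht ω = contract (extendByZero ω) t := by
  rw [eulerContract, LinearMap.coe_sum, Finset.sum_apply, contract,
    ← sum_attach tᶜ (fun i => (sign t i : ℂ) • (X i * extendByZero ω (insert i t)))]
  refine sum_congr rfl fun i _ => ?_
  rw [LinearMap.smul_apply, LinearMap.comp_apply, LinearMap.mulLeft_apply, LinearMap.proj_apply,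
    extendByZero, dif_pos]
  rfl

noncomputable def contraction (n p : ℕ) : Form n (p + 1) →ₗ[ℂ] Form n p :=
  LinearMap.pi fun s => eulerContract n (p + 1) s.1 (by rw [s.2])

theorem extendByZero_contraction (ω : Form n (p + 1)) :
    extendByZero (contraction n p ω) = contract (extendByZero ω) := by
  funext s
  by_cases hs : #s = p
  · rw [extendByZero, dif_pos hs, contraction, LinearMap.pi_apply, eulerContract_eq_contract]
  · rw [extendByZero_of_card_ne _ hs, contract_extendByZero_of_card_ne ω (by omega)]

theorem contraction_eq_zero_iff {ω : Form n (p + 1)} :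
    contraction n p ω = 0 ↔ contract (extendByZero ω) = 0 := by
  have h0 : extendByZero (0 : Form n p) = 0 := funext fun s => by simp [extendByZero]
  rw [← extendByZero_contraction, ← h0, extendByZero_injective.eq_iff]

noncomputable def dForm (ω : Form n p) : Form n (p + 1) := fun s => d (extendByZero ω) s.1

theorem extendByZero_dForm (ω : Form n p) : extendByZero (dForm ω) = d (extendByZero ω) := by
  funext s
  by_cases hs : #s = p + 1
  · rw [extendByZero, dif_pos hs, dForm]
  · rw [extendByZero_of_card_ne _ hs, d_extendByZero_of_card_ne _ hs]

theorem homDeg_natCast (m : ℕ) :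
    homDeg n m = homogeneousSubmodule (Fin (n + 1)) ℂ m := by
  rw [homDeg, if_pos (Int.natCast_nonneg m), Int.toNat_natCast]

theorem homDeg_of_neg {e : ℤ} (he : e < 0) : homDeg n e = ⊥ :=
  if_neg (not_le.2 he)

theorem mem_H0Omega_iff {k : ℤ} {m : ℕ} (hk : k - p = m) {ω : Form n p} :
    ω ∈ H0Omega n p k ↔ (∀ s, (ω s).IsHomogeneous m) ∧ contract (extendByZero ω) = 0 := by
  simp only [H0Omega, Submodule.mem_inf, Submodule.mem_pi, Set.mem_univ, true_implies, hk,
    homDeg_natCast, mem_homogeneousSubmodule, Submodule.mem_iInf, LinearMap.mem_ker,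
    eulerContract_eq_contract]
  refine and_congr_right fun _ => ⟨fun h => funext fun t => ?_, fun h t _ => congrFun h t⟩
  by_cases ht : #t + 1 = p
  exacts [h t ht, contract_extendByZero_of_card_ne ω ht]

theorem H0Omega_eq_bot_of_lt {k : ℤ} (hk : k < p) : H0Omega n p k = ⊥ := by
  refine eq_bot_iff.2 fun ω hω => funext fun s => ?_
  have hs : ω s ∈ homDeg n (k - p) := (Submodule.mem_inf.1 hω).1 s (Set.mem_univ s)
  rwa [homDeg_of_neg (by omega), Submodule.mem_bot] at hs

theorem contraction_dForm {k : ℤ} (hpk : p ≤ k) {ω : Form n p} (hω : ω ∈ H0Omega n p k) :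
    contraction n p (dForm ω) = (k : ℂ) • ω := by
  obtain ⟨m, hm⟩ := Int.eq_ofNat_of_zero_le (sub_nonneg.2 hpk)
  obtain ⟨hhom, hclosed⟩ := (mem_H0Omega_iff hm).1 hω
  have hk : k = (m + p : ℕ) := by omega
  funext s
  rw [← extendByZero_val (contraction n p (dForm ω)), extendByZero_contraction,
    extendByZero_dForm, contract_d_of_contract_eq_zero (isHomogeneous_extendByZero hhom) hclosed,
    extendByZero_val, s.2, Pi.smul_apply, ← Nat.cast_smul_eq_nsmul ℂ, hk, Int.cast_natCast]

theorem eq_zero_of_dForm_eq_zero {k : ℤ} (hk : k ≠ 0) {ω : Form n p} (hω : ω ∈ H0Omega n p k)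
    (hd : dForm ω = 0) : ω = 0 := by
  rcases lt_or_ge k p with hkp | hpk
  · rw [H0Omega_eq_bot_of_lt hkp] at hω
    exact hω
  · have h := contraction_dForm hpk hω
    rw [hd, map_zero, eq_comm, smul_eq_zero] at h
    exact h.resolve_left (Int.cast_ne_zero.2 hk)

theorem H0Omega_self_eq_bot (hp : p ≠ 0) : H0Omega n p p = ⊥ := by
  refine eq_bot_iff.2 fun ω hω => eq_zero_of_dForm_eq_zero (by omega) hω ?_
  have hhom := ((mem_H0Omega_iff (m := 0) (by simp)).1 hω).1
  funext s
  rw [dForm, d_eq_zero_of_isHomogeneous_zero (isHomogeneous_extendByZero hhom)]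
  rfl

theorem H0Omega_eq_bot_of_card_le (hp : n + 1 ≤ p) {k : ℤ} : H0Omega n p k = ⊥ := by
  rcases lt_or_ge k p with hkp | hpk
  · exact H0Omega_eq_bot_of_lt hkp
  refine eq_bot_iff.2 fun ω hω => eq_zero_of_dForm_eq_zero (by omega) hω (funext fun s => ?_)
  exact absurd (card_le_univ s.1) (by rw [s.2, Fintype.card_fin]; omega)

-- `⋀^p V^* ⊗ S_m`
noncomputable abbrev homogeneousForms (n p m : ℕ) : Submodule ℂ (Form n p) :=
  Submodule.pi Set.univ fun _ => homogeneousSubmodule (Fin (n + 1)) ℂ m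

theorem map_contraction_homogeneousForms (m : ℕ) :
    (homogeneousForms n (p + 1) m).map (contraction n p) = H0Omega n p (p + 1 + m : ℕ) := by
  have hk : ((p + 1 + m : ℕ) : ℤ) - p = (m + 1 : ℕ) := by push_cast; ring
  refine le_antisymm ?_ fun ω hω => ?_
  · rintro _ ⟨ω, hω, rfl⟩
    have hhom : ∀ s, (ω s).IsHomogeneous m := fun s => hω s (Set.mem_univ s)
    refine (mem_H0Omega_iff hk).2 ⟨fun s => ?_, ?_⟩
    · rw [← extendByZero_val (contraction n p ω), extendByZero_contraction]
      exact isHomogeneous_contract (isHomogeneous_extendByZero hhom) s.1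
    · rw [extendByZero_contraction, contract_contract]
  · have hhom := ((mem_H0Omega_iff hk).1 hω).1
    have hk0 : ((p + 1 + m : ℕ) : ℂ) ≠ 0 := Nat.cast_ne_zero.2 (by omega)
    refine ⟨((p + 1 + m : ℕ) : ℂ)⁻¹ • dForm ω, fun s _ => Submodule.smul_mem _ _ ?_, ?_⟩
    · exact isHomogeneous_d (isHomogeneous_extendByZero hhom) s.1
    · rw [map_smul, contraction_dForm (by omega) hω, smul_smul, Int.cast_natCast,
        inv_mul_cancel₀ hk0, one_smul]

theorem homogeneousForms_inf_ker_contraction (m : ℕ) :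
    homogeneousForms n (p + 1) m ⊓ LinearMap.ker (contraction n p) =
      H0Omega n (p + 1) (p + 1 + m : ℕ) := by
  ext ω
  rw [Submodule.mem_inf, LinearMap.mem_ker, contraction_eq_zero_iff,
    mem_H0Omega_iff (m := m) (by push_cast; ring)]
  simp only [Submodule.mem_pi, Set.mem_univ, true_implies, mem_homogeneousSubmodule]

theorem finrank_homogeneousForms (n p m : ℕ) :
    finrank ℂ (homogeneousForms n p m) = (n + 1).choose p * (n + m).choose m := by
  rw [Submodule.finrank_pi_univ_const, Fintype.card_finset_len, Fintype.card_fin,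
    finrank_homogeneousSubmodule, Fintype.card_fin, Nat.add_right_comm, Nat.add_sub_cancel]

theorem finrank_H0Omega_add_finrank_H0Omega_succ (n p m : ℕ) :
    finrank ℂ (H0Omega n p (p + 1 + m : ℕ)) + finrank ℂ (H0Omega n (p + 1) (p + 1 + m : ℕ)) =
      (n + 1).choose (p + 1) * (n + m).choose m := by
  rw [← map_contraction_homogeneousForms, ← homogeneousForms_inf_ker_contraction,
    Submodule.finrank_map_add_finrank_inf_ker, finrank_homogeneousForms]

theorem H0Omega_eq_bot_of_le {k : ℤ} (hkp : k ≤ p) (hne : ¬(k = 0 ∧ p = 0)) :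
    H0Omega n p k = ⊥ := by
  rcases hkp.lt_or_eq with hkp | rfl
  · exact H0Omega_eq_bot_of_lt hkp
  · exact H0Omega_self_eq_bot (by omega)

theorem finrank_H0Omega_natCast {a : ℕ} (ha : 1 ≤ a) {q : ℕ} (hq : q ≤ n + 1) :
    finrank ℂ (H0Omega n q a) = (a + n - q).choose a * (a - 1).choose q := by
  induction hq using Nat.decreasingInduction with
  | self =>
    rw [H0Omega_eq_bot_of_card_le le_rfl, finrank_bot, Nat.choose_eq_zero_of_lt (by omega),
      zero_mul]
  | of_succ q hq ih =>
    rcases lt_or_ge q a with hqa | haq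
    · obtain ⟨m, rfl⟩ : ∃ m, a = q + 1 + m := ⟨a - (q + 1), by omega⟩
      obtain ⟨r, rfl⟩ : ∃ r, n = q + r := ⟨n - q, by omega⟩
      have hrec := finrank_H0Omega_add_finrank_H0Omega_succ (q + r) q m
      have hid := Nat.choose_mul_choose_add_choose_mul_choose q m r
      rw [ih, show q + 1 + m + (q + r) - (q + 1) = q + m + r by omega,
        show q + 1 + m - 1 = q + m by omega] at hrec
      rw [show q + 1 + m + (q + r) - q = q + m + r + 1 by omega,
        show q + 1 + m - 1 = q + m by omega]
      omega
    · rw [H0Omega_eq_bot_of_le (by omega) (by omega), finrank_bot,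
        Nat.choose_eq_zero_of_lt (by omega : a - 1 < q), mul_zero]

end Bott

open Bott in
theorem stmt_4_general (n p : ℕ) (k : ℤ) (hp : p ≤ n) :
    ((p : ℤ) < k →
      Module.finrank ℂ (H0Omega n p k) =
        Nat.choose (k + n - p).toNat k.toNat * Nat.choose (k - 1).toNat p) ∧
    (k ≤ (p : ℤ) → ¬(k = 0 ∧ p = 0) → H0Omega n p k = ⊥) := by
  refine ⟨fun hpk => ?_, H0Omega_eq_bot_of_le⟩
  lift k to ℕ using by omega
  rw [finrank_H0Omega_natCast (by omega) (by omega)]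
  congr 2 <;> omega

/-- Bott's formula for `h⁰(ℙⁿ, Ω^p(k))`. -/
theorem stmt_4 (n p : ℕ) (k : ℤ) (hn : 1 ≤ n) (hp : p ≤ n) :
    ((p : ℤ) < k →
      Module.finrank ℂ (H0Omega n p k) =
        Nat.choose (k + n - p).toNat k.toNat * Nat.choose (k - 1).toNat p) ∧
    (k ≤ (p : ℤ) → ¬(k = 0 ∧ p = 0) → H0Omega n p k = ⊥) :=
  stmt_4_general n p k hp
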